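/- Let α ∈ (0,1), λ ∈ ℂ, let a, b be continuous complex-valued functions on [−1,1], let ψ : [−1,1] → [−1,1] be continuous, let Φ be an entire function, and let R₀ > 0. Then for all continuous f, g : [−1,1] → ℂ with ‖f‖_{∞,[−1,1]} ≤ R₀ and ‖g‖_{∞,[−1,1]} ≤ R₀, one has ‖T(f) − T(g)‖_{∞,[−1,1]} ≤ (2^α/(α·Γ(α)))·‖a‖_{∞,[−1,1]}·(sup_{|z|≤R₀}|Φ′(z)|)·‖f − g‖_{∞,[−1,1]}. -/

import Mathlib

/-- `‖f‖_{∞,[−1,1]}`, the supremum of `‖f‖` over `[−1,1]`. -/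
noncomputable def supSeg (f : ℝ → ℂ) : ℝ := ⨆ t : Set.Icc (-1 : ℝ) 1, ‖f t.1‖

/-- The operator `T(f)(t) = (1/Γ(α)) ∫_{−1}^t (t−s)^{α−1}(a(s)·Φ(f(ψ(s))) + b(s)) ds + λ`. -/
noncomputable def TOper (α : ℝ) (lam : ℂ) (a b : ℝ → ℂ) (Φ : ℂ → ℂ) (ψ : ℝ → ℝ)
    (f : ℝ → ℂ) (t : ℝ) : ℂ :=
  (1 / (Real.Gamma α : ℂ)) *
      ∫ s in (-1 : ℝ)..t, ((((t - s) ^ (α - 1) : ℝ)) : ℂ) * (a s * Φ (f (ψ s)) + b s) + lam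

/-!
The kernel `(t - s)^(α-1)` is integrable on `[-1, t]` with integral `(t + 1)^α / α ≤ 2^α / α`, and
the constant `λ` and the inhomogeneity `b` cancel in `T(f) - T(g)`. What remains is controlled
pointwise by `‖a‖_∞` times the Lipschitz constant of `Φ` on the disc of radius `R₀`, which the mean
value inequality bounds by `sup_{|z| ≤ R₀} |Φ'(z)|`, times `‖f - g‖_∞`.
-/

open Set MeasureTheory Metric

lemma bddAbove_range_norm_of_continuousOn_Icc {f : ℝ → ℂ} (hf : ContinuousOn f (Icc (-1) 1)) :
    BddAbove (range fun t : Icc (-1 : ℝ) 1 => ‖f t‖) := by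
  simpa only [image_eq_range] using (isCompact_Icc.image_of_continuousOn hf.norm).bddAbove

lemma norm_le_supSeg {f : ℝ → ℂ} (hf : ContinuousOn f (Icc (-1) 1)) {t : ℝ}
    (ht : t ∈ Icc (-1 : ℝ) 1) : ‖f t‖ ≤ supSeg f :=
  le_ciSup (bddAbove_range_norm_of_continuousOn_Icc hf) (⟨t, ht⟩ : Icc (-1 : ℝ) 1)

lemma supSeg_le {f : ℝ → ℂ} {C : ℝ} (h : ∀ t ∈ Icc (-1 : ℝ) 1, ‖f t‖ ≤ C) : supSeg f ≤ C :=
  have : Nonempty (Icc (-1 : ℝ) 1) := ⟨⟨0, by norm_num, by norm_num⟩⟩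
  ciSup_le fun t => h t.1 t.2

lemma supSeg_nonneg (f : ℝ → ℂ) : 0 ≤ supSeg f :=
  Real.iSup_nonneg fun _ => norm_nonneg _

theorem norm_sub_le_iSup_norm_deriv_mul {F : Type*} [NormedAddCommGroup F] [NormedSpace ℂ F]
    [CompleteSpace F] {Φ : ℂ → F} (hΦ : Differentiable ℂ Φ) {c x y : ℂ} {r : ℝ}
    (hx : x ∈ closedBall c r) (hy : y ∈ closedBall c r) :
    ‖Φ x - Φ y‖ ≤ (⨆ z : closedBall c r, ‖deriv Φ z‖) * ‖x - y‖ := by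
  have hbdd : BddAbove (range fun z : closedBall c r => ‖deriv Φ z‖) := by
    simpa only [image_eq_range] using ((isCompact_closedBall c r).image_of_continuousOn
      (hΦ.contDiff (n := 1)).continuous_deriv_one.norm.continuousOn).bddAbove
  exact (convex_closedBall c r).norm_image_sub_le_of_norm_deriv_le (fun z _ => hΦ z)
    (fun z hz => le_ciSup hbdd (⟨z, hz⟩ : closedBall c r)) hy hx

section RiemannLiouvilleKernel

variable {α a t : ℝ}

lemma intervalIntegrable_rpow_sub_left (hα : 0 < α) :
    IntervalIntegrable (fun s => (t - s) ^ (α - 1)) volume a t := by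
  simpa only [sub_sub_cancel] using (intervalIntegral.intervalIntegrable_rpow' (a := t - a)
    (b := t - t) (r := α - 1) (by linarith)).comp_sub_left t

lemma integral_rpow_sub_left (hα : 0 < α) :
    ∫ s in a..t, (t - s) ^ (α - 1) = (t - a) ^ α / α := by
  rw [intervalIntegral.integral_comp_sub_left (fun u => u ^ (α - 1)) t, sub_self,
    integral_rpow (Or.inl (by linarith)), sub_add_cancel, Real.zero_rpow hα.ne', sub_zero]

lemma intervalIntegrable_kernel_mul (hα : 0 < α) {h : ℝ → ℂ} (hh : ContinuousOn h (uIcc a t)) :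
    IntervalIntegrable (fun s => (((t - s) ^ (α - 1) : ℝ) : ℂ) * h s) volume a t :=
  have hker := intervalIntegrable_rpow_sub_left (a := a) (t := t) hα
  IntervalIntegrable.mul_continuousOn ⟨hker.1.ofReal, hker.2.ofReal⟩ hh

lemma norm_integral_kernel_mul_le (hα : 0 < α) (hat : a ≤ t) {h : ℝ → ℂ} {C : ℝ}
    (hh : ∀ s ∈ Ioc a t, ‖h s‖ ≤ C) :
    ‖∫ s in a..t, (((t - s) ^ (α - 1) : ℝ) : ℂ) * h s‖ ≤ (t - a) ^ α / α * C := by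
  rw [← integral_rpow_sub_left hα, ← intervalIntegral.integral_mul_const]
  refine intervalIntegral.norm_integral_le_of_norm_le hat (ae_of_all _ fun s hs => ?_)
    ((intervalIntegrable_rpow_sub_left hα).mul_const C)
  have hker : 0 ≤ (t - s) ^ (α - 1) := Real.rpow_nonneg (by linarith [hs.2]) _
  rw [norm_mul, Complex.norm_real, Real.norm_of_nonneg hker]
  exact mul_le_mul_of_nonneg_left (hh s hs) hker

end RiemannLiouvilleKernel

lemma TOper_sub_TOper {α t : ℝ} {lam : ℂ} {a b f g : ℝ → ℂ} {Φ : ℂ → ℂ} {ψ : ℝ → ℝ} (hα : 0 < α)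
    (hf : ContinuousOn (fun s => a s * Φ (f (ψ s)) + b s) (uIcc (-1) t))
    (hg : ContinuousOn (fun s => a s * Φ (g (ψ s)) + b s) (uIcc (-1) t)) :
    TOper α lam a b Φ ψ f t - TOper α lam a b Φ ψ g t =
      1 / (Real.Gamma α : ℂ) *
        ∫ s in (-1)..t, (((t - s) ^ (α - 1) : ℝ) : ℂ) * (a s * (Φ (f (ψ s)) - Φ (g (ψ s)))) := by
  rw [TOper, TOper, ← mul_sub, ← intervalIntegral.integral_sub
    ((intervalIntegrable_kernel_mul hα hf).add intervalIntegrable_const)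
    ((intervalIntegrable_kernel_mul hα hg).add intervalIntegrable_const)]
  congr 1
  exact intervalIntegral.integral_congr fun s _ => by ring

lemma norm_comp_sub_comp_le {Φ : ℂ → ℂ} (hΦ : Differentiable ℂ Φ) {f g : ℝ → ℂ} {R₀ : ℝ}
    (hf : ContinuousOn f (Icc (-1) 1)) (hg : ContinuousOn g (Icc (-1) 1))
    (hfR : supSeg f ≤ R₀) (hgR : supSeg g ≤ R₀) {u : ℝ} (hu : u ∈ Icc (-1 : ℝ) 1) :
    ‖Φ (f u) - Φ (g u)‖ ≤
      (⨆ z : closedBall (0 : ℂ) R₀, ‖deriv Φ z.1‖) * supSeg (fun t => f t - g t) := by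
  have mem_ball {h : ℝ → ℂ} (hh : ContinuousOn h (Icc (-1) 1)) (hhR : supSeg h ≤ R₀) :
      h u ∈ closedBall (0 : ℂ) R₀ :=
    mem_closedBall_zero_iff.2 ((norm_le_supSeg hh hu).trans hhR)
  exact (norm_sub_le_iSup_norm_deriv_mul hΦ (mem_ball hf hfR) (mem_ball hg hgR)).trans
    (mul_le_mul_of_nonneg_left (norm_le_supSeg (f := fun t => f t - g t) (hf.sub hg) hu)
      (Real.iSup_nonneg fun _ => norm_nonneg _))

theorem stmt_3_general (α R₀ : ℝ) (lam : ℂ) (a b : ℝ → ℂ) (Φ : ℂ → ℂ) (ψ : ℝ → ℝ)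
    (hα : α ∈ Set.Ioo (0:ℝ) 1)
    (ha : ContinuousOn a (Set.Icc (-1:ℝ) 1)) (hb : ContinuousOn b (Set.Icc (-1:ℝ) 1))
    (hψ : ContinuousOn ψ (Set.Icc (-1:ℝ) 1))
    (hψm : Set.MapsTo ψ (Set.Icc (-1:ℝ) 1) (Set.Icc (-1:ℝ) 1))
    (hΦ : Differentiable ℂ Φ) :
    ∀ f g : ℝ → ℂ, ContinuousOn f (Set.Icc (-1:ℝ) 1) → ContinuousOn g (Set.Icc (-1:ℝ) 1) →
      supSeg f ≤ R₀ → supSeg g ≤ R₀ →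
      supSeg (fun t => TOper α lam a b Φ ψ f t - TOper α lam a b Φ ψ g t) ≤
        2 ^ α / (α * Real.Gamma α) * supSeg a *
          (⨆ z : Metric.closedBall (0 : ℂ) R₀, ‖deriv Φ z.1‖) *
          supSeg (fun t => f t - g t) := by
  intro f g hf hg hfR hgR
  have hα0 : 0 < α := hα.1
  set C := supSeg a * ((⨆ z : closedBall (0 : ℂ) R₀, ‖deriv Φ z.1‖) * supSeg fun t => f t - g t)
  have hC : 0 ≤ C :=
    mul_nonneg (supSeg_nonneg a)
      (mul_nonneg (Real.iSup_nonneg fun _ => norm_nonneg _) (supSeg_nonneg _))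
  have hinner {h : ℝ → ℂ} (hh : ContinuousOn h (Icc (-1) 1)) :
      ContinuousOn (fun s => a s * Φ (h (ψ s)) + b s) (Icc (-1) 1) :=
    (ha.mul (hΦ.continuous.comp_continuousOn (hh.comp hψ hψm))).add hb
  refine supSeg_le fun t ht => ?_
  have hsub : uIcc (-1) t ⊆ Icc (-1 : ℝ) 1 := by
    rw [uIcc_of_le ht.1]; exact Icc_subset_Icc_right ht.2
  have hbound : ∀ s ∈ Ioc (-1) t, ‖a s * (Φ (f (ψ s)) - Φ (g (ψ s)))‖ ≤ C := fun s hs => by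
    have hs' : s ∈ Icc (-1 : ℝ) 1 := ⟨hs.1.le, hs.2.trans ht.2⟩
    rw [norm_mul]
    exact mul_le_mul (norm_le_supSeg ha hs') (norm_comp_sub_comp_le hΦ hf hg hfR hgR (hψm hs'))
      (norm_nonneg _) (supSeg_nonneg a)
  have hΓ : 0 < Real.Gamma α := Real.Gamma_pos_of_pos hα0
  rw [TOper_sub_TOper hα0 ((hinner hf).mono hsub) ((hinner hg).mono hsub), norm_mul, norm_div,
    norm_one, Complex.norm_real, Real.norm_of_nonneg hΓ.le]
  calc 1 / Real.Gamma α * ‖_‖ ≤ 1 / Real.Gamma α * ((t - -1) ^ α / α * C) := by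
        gcongr; exact norm_integral_kernel_mul_le hα0 ht.1 hbound
    _ ≤ 1 / Real.Gamma α * (2 ^ α / α * C) := by
        have hpow : (t - -1) ^ α ≤ 2 ^ α :=
          Real.rpow_le_rpow (by linarith [ht.1]) (by linarith [ht.2]) hα0.le
        gcongr
    _ = _ := by simp only [C]; field_simp

theorem stmt_3 (α R₀ : ℝ) (lam : ℂ) (a b : ℝ → ℂ) (Φ : ℂ → ℂ) (ψ : ℝ → ℝ)
    (hα : α ∈ Set.Ioo (0:ℝ) 1)
    (ha : ContinuousOn a (Set.Icc (-1:ℝ) 1)) (hb : ContinuousOn b (Set.Icc (-1:ℝ) 1))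
    (hψ : ContinuousOn ψ (Set.Icc (-1:ℝ) 1))
    (hψm : Set.MapsTo ψ (Set.Icc (-1:ℝ) 1) (Set.Icc (-1:ℝ) 1))
    (hΦ : Differentiable ℂ Φ) (hR₀ : 0 < R₀) :
    ∀ f g : ℝ → ℂ, ContinuousOn f (Set.Icc (-1:ℝ) 1) → ContinuousOn g (Set.Icc (-1:ℝ) 1) →
      supSeg f ≤ R₀ → supSeg g ≤ R₀ →
      supSeg (fun t => TOper α lam a b Φ ψ f t - TOper α lam a b Φ ψ g t) ≤
        2 ^ α / (α * Real.Gamma α) * supSeg a *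
          (⨆ z : Metric.closedBall (0 : ℂ) R₀, ‖deriv Φ z.1‖) *
          supSeg (fun t => f t - g t) :=
  stmt_3_general α R₀ lam a b Φ ψ hα ha hb hψ hψm hΦ
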